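/- arXiv:1907.00117 — 6 statements merged into one kernel-verified Lean document; each statement's English description precedes it below -/
import Mathlib

section
/- Let V be a finite set of n vertices with symmetric nonnegative edge weights w, η: V → ℝ≥0 with Σ_{v∈V} η(v) = 1, integers T ≥ 1 and k ≥ 1, H ∈ (0,1) with H ≥ 1/(32k), source-sink pairs (s_1,t_1),…,(s_T,t_T), and vectors v̄ (v ∈ V) in a real inner product space satisfying: ‖v̄‖² ≤ 1 for all v; ‖s̄_i−t̄_i‖² ≥ max(‖s̄_i‖², ‖t̄_i‖²) for every i; Σ_{v∈V} η(v)‖v̄‖² ≥ 3H/4; and the spreading constraint Σ_{v∈V} η(v)·min(‖ū−v̄‖², ‖ū‖²) ≥ (1−2H)·‖ū‖² for every u ∈ V. Set SDP = Σ over edges of w(u,v)·‖ū−v̄‖² and assume SDP > 0. Let α > 0, D > 0, and let μ be a probability distribution over subsets S ⊆ V such that: (i) Pr(u ∈ S) = α·‖ū‖² for every u; (ii) Pr(u ∈ S and v ∈ S) ≤ min(Pr(u∈S), Pr(v∈S))/(32Tk) whenever ‖ū−v̄‖² ≥ (1/2)·min(‖ū‖², ‖v̄‖²); (iii) Pr(exactly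 one of u, v lies in S) ≤ αD·‖ū−v̄‖² for all u, v. Define f(S) = η(S) − δ(S)·H/(32·D·SDP) − 16·vio(S)·H·k if S ≠ ∅ and η(S) < 12H, and f(S) = 0 otherwise. Then E_μ[f(S)] ≥ αH/8. -/
open Finset

attribute [local instance] Classical.propDecidable

/-- `δ(S)`: total weight of edges with exactly one endpoint in `S`. -/
noncomputable def cutw {V : Type*} [Fintype V] (w : V → V → ℝ) (S : Finset V) : ℝ :=
  ∑ u, ∑ v, if u ∈ S ∧ v ∉ S then w u v else 0

/-- `vio(S)`: number of source-sink pairs with both endpoints in `S`. -/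
noncomputable def vioCount {V : Type*} {T : ℕ} (pairs : Fin T → V × V)
    (S : Finset V) : ℕ :=
  (Finset.univ.filter fun i : Fin T => (pairs i).1 ∈ S ∧ (pairs i).2 ∈ S).card

lemma exch {V ι : Type*} [Fintype V] (μ : Finset V → ℝ) (s : Finset ι)
    (g : ι → ℝ) (p : ι → Finset V → Prop) [∀ i, DecidablePred (p i)] :
    ∑ S : Finset V, μ S * ∑ i ∈ s, (if p i S then g i else 0)
      = ∑ i ∈ s, g i * ∑ S ∈ Finset.univ.filter (p i), μ S := by
  calc ∑ S : Finset V, μ S * ∑ i ∈ s, (if p i S then g i else 0)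
      = ∑ S : Finset V, ∑ i ∈ s, (if p i S then μ S * g i else 0) := by
        refine Finset.sum_congr rfl fun S _ => ?_
        rw [Finset.mul_sum]
        exact Finset.sum_congr rfl fun i _ => by rw [mul_ite, mul_zero]
    _ = ∑ i ∈ s, ∑ S : Finset V, (if p i S then μ S * g i else 0) := Finset.sum_comm
    _ = ∑ i ∈ s, g i * ∑ S ∈ Finset.univ.filter (p i), μ S := by
        refine Finset.sum_congr rfl fun i _ => ?_
        rw [Finset.sum_filter, Finset.mul_sum]
        exact Finset.sum_congr rfl fun S _ => by rw [mul_ite, mul_zero, mul_comm]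

set_option maxHeartbeats 1000000 in
/-- The key expectation bound `E[f(S)] ≥ αH/8` in the analysis of the SDP rounding
algorithm for min-max multicut, where `μ` is a `(32Tk)`-orthogonal separator with
probability scale `α`, threshold `1/2` and distortion `D`. -/
theorem expected_f_lower_bound
    (V : Type) [Fintype V] [DecidableEq V] (w : V → V → ℝ)
    (hw : ∀ u v, w u v = w v u) (hw0 : ∀ u v, 0 ≤ w u v)
    (η : V → ℝ) (hη0 : ∀ v, 0 ≤ η v) (hη1 : ∑ v, η v = 1)
    (T k : ℕ) (hT : 1 ≤ T) (hk : 1 ≤ k)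
    (H : ℝ) (hH0 : 0 < H) (hH1 : H < 1) (hHk : 1 / (32 * (k : ℝ)) ≤ H)
    (pairs : Fin T → V × V)
    (E : Type) [NormedAddCommGroup E] [InnerProductSpace ℝ E]
    (vb : V → E)
    (hnorm : ∀ v, ‖vb v‖ ^ 2 ≤ 1)
    (hpairs : ∀ i : Fin T,
      max (‖vb (pairs i).1‖ ^ 2) (‖vb (pairs i).2‖ ^ 2) ≤
        ‖vb (pairs i).1 - vb (pairs i).2‖ ^ 2)
    (hmass : 3 * H / 4 ≤ ∑ v, η v * ‖vb v‖ ^ 2)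
    (hspread : ∀ u : V,
      (1 - 2 * H) * ‖vb u‖ ^ 2 ≤ ∑ v, η v * min (‖vb u - vb v‖ ^ 2) (‖vb u‖ ^ 2))
    (SDP : ℝ) (hSDP : SDP = (∑ u, ∑ v, w u v * ‖vb u - vb v‖ ^ 2) / 2)
    (hSDPpos : 0 < SDP)
    (α D : ℝ) (hα : 0 < α) (hD : 0 < D)
    (μ : Finset V → ℝ) (hμ0 : ∀ S, 0 ≤ μ S) (hμ1 : ∑ S : Finset V, μ S = 1)
    -- (i) marginals
    (hprop1 : ∀ u : V,
      ∑ S ∈ Finset.univ.filter (fun S : Finset V => u ∈ S), μ S = α * ‖vb u‖ ^ 2)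
    -- (ii) separation
    (hprop2 : ∀ u v : V,
      (1 / 2) * min (‖vb u‖ ^ 2) (‖vb v‖ ^ 2) ≤ ‖vb u - vb v‖ ^ 2 →
      ∑ S ∈ Finset.univ.filter (fun S : Finset V => u ∈ S ∧ v ∈ S), μ S ≤
        min (∑ S ∈ Finset.univ.filter (fun S : Finset V => u ∈ S), μ S)
            (∑ S ∈ Finset.univ.filter (fun S : Finset V => v ∈ S), μ S) /
          (32 * (T : ℝ) * (k : ℝ)))
    -- (iii) distortion
    (hprop3 : ∀ u v : V,
      ∑ S ∈ Finset.univ.filter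
        (fun S : Finset V => (u ∈ S ∧ v ∉ S) ∨ (u ∉ S ∧ v ∈ S)), μ S ≤
        α * D * ‖vb u - vb v‖ ^ 2)
    (f : Finset V → ℝ)
    (hf : ∀ S : Finset V, f S =
      if S.Nonempty ∧ (∑ v ∈ S, η v) < 12 * H then
        (∑ v ∈ S, η v) - cutw w S * H / (32 * D * SDP) -
          16 * (vioCount pairs S : ℝ) * H * (k : ℝ)
      else 0) :
    α * H / 8 ≤ ∑ S : Finset V, μ S * f S := by
  classical
  have hT1 : (1:ℝ) ≤ (T:ℝ) := by exact_mod_cast hT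
  have hk1 : (1:ℝ) ≤ (k:ℝ) := by exact_mod_cast hk
  have hTk : (0:ℝ) < 32 * (T:ℝ) * (k:ℝ) := by nlinarith
  have hfrac : 1 / (32 * (T:ℝ) * (k:ℝ)) ≤ H := by
    have h1 : (0:ℝ) < 32 * (k:ℝ) := by nlinarith
    have h2 : 32 * (k:ℝ) ≤ 32 * (T:ℝ) * (k:ℝ) := by nlinarith
    exact le_trans (one_div_le_one_div_of_le h1 h2) hHk
  have hcutw0 : ∀ S : Finset V, 0 ≤ cutw w S := by
    intro S
    refine Finset.sum_nonneg fun u _ => Finset.sum_nonneg fun v _ => ?_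
    by_cases h : u ∈ S ∧ v ∉ S <;> simp [h, hw0]
  -- E[η(S)] = α * m
  have hmem : ∀ S : Finset V, (∑ v ∈ S, η v) = ∑ v, (if v ∈ S then η v else 0) := by
    intro S; rw [Finset.sum_ite_mem, Finset.univ_inter]
  have hEeta : ∑ S : Finset V, μ S * (∑ v ∈ S, η v) = α * ∑ v, η v * ‖vb v‖ ^ 2 := by
    simp_rw [hmem]
    rw [exch μ Finset.univ η (fun v S => v ∈ S), Finset.mul_sum]
    refine Finset.sum_congr rfl fun v _ => ?_
    rw [hprop1 v]; ring
  -- E[cutw] ≤ α D SDP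
  have hEcut : ∑ S : Finset V, μ S * cutw w S ≤ α * D * SDP := by
    have h1 : ∀ S : Finset V, cutw w S
        = ∑ p : V × V, (if p.1 ∈ S ∧ p.2 ∉ S then w p.1 p.2 else 0) := by
      intro S; rw [cutw, Fintype.sum_prod_type]
      exact Finset.sum_congr rfl fun u _ => Finset.sum_congr rfl fun v _ => by norm_num
    have h2 : ∑ S : Finset V, μ S * cutw w S
        = ∑ p : V × V, w p.1 p.2 *
            ∑ S ∈ Finset.univ.filter (fun S : Finset V => p.1 ∈ S ∧ p.2 ∉ S), μ S := by
      simp_rw [h1]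
      exact exch μ Finset.univ (fun p : V × V => w p.1 p.2)
        (fun p S => p.1 ∈ S ∧ p.2 ∉ S)
    set Pc : V → V → ℝ := fun u v =>
      ∑ S ∈ Finset.univ.filter (fun S : Finset V => u ∈ S ∧ v ∉ S), μ S with hPc
    have h3 : ∑ S : Finset V, μ S * cutw w S = ∑ u, ∑ v, w u v * Pc u v := by
      rw [h2, Fintype.sum_prod_type]
    have hswap : (∑ u, ∑ v, w u v * Pc v u) = ∑ u, ∑ v, w u v * Pc u v := by
      rw [Finset.sum_comm]
      refine Finset.sum_congr rfl fun a _ => Finset.sum_congr rfl fun b _ => ?_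
      rw [hw]
    have hsymadd : ∀ u v : V, Pc u v + Pc v u
        = ∑ S ∈ Finset.univ.filter
            (fun S : Finset V => (u ∈ S ∧ v ∉ S) ∨ (u ∉ S ∧ v ∈ S)), μ S := by
      intro u v
      rw [hPc]
      simp only [Finset.sum_filter]
      rw [← Finset.sum_add_distrib]
      refine Finset.sum_congr rfl fun S _ => ?_
      by_cases h1 : u ∈ S <;> by_cases h2 : v ∈ S <;> simp [h1, h2]
    have hdub : (∑ u, ∑ v, w u v * Pc u v) + (∑ u, ∑ v, w u v * Pc u v)
        ≤ α * D * (2 * SDP) := by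
      have hstep : ∑ u, ∑ v, w u v * (Pc u v + Pc v u)
          = (∑ u, ∑ v, w u v * Pc u v) + (∑ u, ∑ v, w u v * Pc v u) := by
        simp_rw [mul_add, Finset.sum_add_distrib]
      nth_rewrite 2 [← hswap]
      rw [← hstep]
      have hle : ∑ u, ∑ v, w u v * (Pc u v + Pc v u)
          ≤ ∑ u, ∑ v, w u v * (α * D * ‖vb u - vb v‖ ^ 2) := by
        refine Finset.sum_le_sum fun u _ => Finset.sum_le_sum fun v _ => ?_
        refine mul_le_mul_of_nonneg_left ?_ (hw0 u v)
        rw [hsymadd u v]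
        exact hprop3 u v
      refine le_trans hle (le_of_eq ?_)
      have : ∀ u v : V, w u v * (α * D * ‖vb u - vb v‖ ^ 2)
          = α * D * (w u v * ‖vb u - vb v‖ ^ 2) := fun u v => by ring
      simp_rw [this, ← Finset.mul_sum]
      rw [hSDP]; ring
    rw [h3]; linarith
  -- E[vio-term] ≤ α H / 2
  have hEvio : ∑ S : Finset V, μ S * (16 * (vioCount pairs S : ℝ) * H * (k:ℝ))
      ≤ α * H / 2 := by
    have hcast : ∀ S : Finset V, (vioCount pairs S : ℝ)
        = ∑ i : Fin T, (if (pairs i).1 ∈ S ∧ (pairs i).2 ∈ S then (1:ℝ) else 0) := by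
      intro S
      rw [vioCount, Finset.card_filter]
      push_cast
      rfl
    have hEv : ∑ S : Finset V, μ S * (vioCount pairs S : ℝ)
        = ∑ i : Fin T, ∑ S ∈ Finset.univ.filter
            (fun S : Finset V => (pairs i).1 ∈ S ∧ (pairs i).2 ∈ S), μ S := by
      simp_rw [hcast]
      rw [exch μ Finset.univ (fun _ : Fin T => (1:ℝ))
        (fun i S => (pairs i).1 ∈ S ∧ (pairs i).2 ∈ S)]
      simp
    have hbound : ∀ i : Fin T,
        ∑ S ∈ Finset.univ.filter
          (fun S : Finset V => (pairs i).1 ∈ S ∧ (pairs i).2 ∈ S), μ S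
        ≤ α / (32 * (T:ℝ) * (k:ℝ)) := by
      intro i
      have hmin0 : (0:ℝ) ≤ min (‖vb (pairs i).1‖ ^ 2) (‖vb (pairs i).2‖ ^ 2) :=
        le_min (by positivity) (by positivity)
      have hpre : (1/2) * min (‖vb (pairs i).1‖ ^ 2) (‖vb (pairs i).2‖ ^ 2)
          ≤ ‖vb (pairs i).1 - vb (pairs i).2‖ ^ 2 := by
        have h1 : (1/2) * min (‖vb (pairs i).1‖ ^ 2) (‖vb (pairs i).2‖ ^ 2)
            ≤ min (‖vb (pairs i).1‖ ^ 2) (‖vb (pairs i).2‖ ^ 2) := by linarith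
        exact le_trans h1 (le_trans (min_le_max) (hpairs i))
      refine le_trans (hprop2 _ _ hpre) ?_
      rw [hprop1, hprop1]
      have h1 : min (α * ‖vb (pairs i).1‖ ^ 2) (α * ‖vb (pairs i).2‖ ^ 2) ≤ α := by
        refine le_trans (min_le_left _ _) ?_
        nlinarith [hnorm (pairs i).1]
      exact (div_le_div_iff_of_pos_right hTk).mpr h1
    have hrw : ∀ S : Finset V, μ S * (16 * (vioCount pairs S : ℝ) * H * (k:ℝ))
        = 16 * H * (k:ℝ) * (μ S * (vioCount pairs S : ℝ)) := fun S => by ring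
    simp_rw [hrw]
    rw [← Finset.mul_sum, hEv]
    have hsum : ∑ i : Fin T, ∑ S ∈ Finset.univ.filter
          (fun S : Finset V => (pairs i).1 ∈ S ∧ (pairs i).2 ∈ S), μ S
        ≤ (T:ℝ) * (α / (32 * (T:ℝ) * (k:ℝ))) := by
      refine le_trans (Finset.sum_le_sum fun i _ => hbound i) ?_
      rw [Finset.sum_const, Finset.card_univ, Fintype.card_fin, nsmul_eq_mul]
    have h16 : (0:ℝ) ≤ 16 * H * (k:ℝ) := by positivity
    refine le_trans (mul_le_mul_of_nonneg_left hsum h16) (le_of_eq ?_)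
    have hT0 : (T:ℝ) ≠ 0 := by positivity
    have hk0 : (k:ℝ) ≠ 0 := by positivity
    field_simp
    ring
  -- close mass ≤ 4H
  have hclose : ∀ u : V,
      ∑ v ∈ Finset.univ.filter (fun v : V =>
        ¬ ((1/2) * min (‖vb u‖ ^ 2) (‖vb v‖ ^ 2) ≤ ‖vb u - vb v‖ ^ 2)), η v
      ≤ 4 * H := by
    intro u
    have hX0 : (0:ℝ) ≤ ‖vb u‖ ^ 2 := by positivity
    rcases hX0.eq_or_lt with hX | hX
    · have hempty : Finset.univ.filter (fun v : V =>
          ¬ ((1/2) * min (‖vb u‖ ^ 2) (‖vb v‖ ^ 2) ≤ ‖vb u - vb v‖ ^ 2)) = ∅ := by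
        refine Finset.filter_eq_empty_iff.mpr fun v _ => ?_
        rw [not_not]
        have hminz : min (‖vb u‖ ^ 2) (‖vb v‖ ^ 2) = 0 := by
          rw [← hX]
          exact min_eq_left (by positivity)
        rw [hminz]
        have := sq_nonneg ‖vb u - vb v‖
        linarith
      rw [hempty, Finset.sum_empty]
      linarith
    · set p : V → Prop := fun v =>
        (1/2) * min (‖vb u‖ ^ 2) (‖vb v‖ ^ 2) ≤ ‖vb u - vb v‖ ^ 2 with hp
      have hsplit := Finset.sum_filter_add_sum_filter_not Finset.univ p
        (fun v => η v * min (‖vb u - vb v‖ ^ 2) (‖vb u‖ ^ 2))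
      have hsplit1 := Finset.sum_filter_add_sum_filter_not Finset.univ p η
      set F := ∑ v ∈ Finset.univ.filter p, η v with hF
      set c := ∑ v ∈ Finset.univ.filter (fun v => ¬ p v), η v with hc
      have hFar : ∑ v ∈ Finset.univ.filter p,
          η v * min (‖vb u - vb v‖ ^ 2) (‖vb u‖ ^ 2) ≤ F * ‖vb u‖ ^ 2 := by
        rw [hF, Finset.sum_mul]
        refine Finset.sum_le_sum fun v _ => ?_
        exact mul_le_mul_of_nonneg_left (min_le_right _ _) (hη0 v)
      have hClo : ∑ v ∈ Finset.univ.filter (fun v => ¬ p v),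
          η v * min (‖vb u - vb v‖ ^ 2) (‖vb u‖ ^ 2) ≤ c * ((1/2) * ‖vb u‖ ^ 2) := by
        rw [hc, Finset.sum_mul]
        refine Finset.sum_le_sum fun v hv => ?_
        have hv' : ¬ p v := (Finset.mem_filter.mp hv).2
        rw [hp] at hv'
        push_neg at hv'
        have h1 : ‖vb u - vb v‖ ^ 2 ≤ (1/2) * ‖vb u‖ ^ 2 := by
          have := min_le_left (‖vb u‖ ^ 2) (‖vb v‖ ^ 2)
          nlinarith
        refine mul_le_mul_of_nonneg_left ?_ (hη0 v)
        exact le_trans (min_le_left _ _) h1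
      have hFc : F + c = 1 := by rw [hF, hc, hsplit1, hη1]
      have hcombo : (1 - 2*H) * ‖vb u‖ ^ 2 ≤ (F + c * (1/2)) * ‖vb u‖ ^ 2 := by
        refine le_trans (hspread u) ?_
        rw [← hsplit]
        nlinarith
      nlinarith [hcombo, hX, hFc]
  -- key: Pr[u ∈ S and η(S) ≥ 12H] ≤ α‖u‖²/8
  have hkey : ∀ u : V,
      ∑ S ∈ Finset.univ.filter
        (fun S : Finset V => u ∈ S ∧ 12 * H ≤ ∑ x ∈ S, η x), μ S
      ≤ α * ‖vb u‖ ^ 2 / 8 := by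
    intro u
    set Far : Finset V := Finset.univ.filter (fun v : V =>
      (1/2) * min (‖vb u‖ ^ 2) (‖vb v‖ ^ 2) ≤ ‖vb u - vb v‖ ^ 2) with hFar
    -- far mass in S is at least 8H on bad sets
    have h8H : ∀ S : Finset V, 12 * H ≤ ∑ x ∈ S, η x →
        8 * H ≤ ∑ v ∈ Far, (if v ∈ S then η v else 0) := by
      intro S hS
      have hsplit := Finset.sum_filter_add_sum_filter_not Finset.univ
        (fun v : V => (1/2) * min (‖vb u‖ ^ 2) (‖vb v‖ ^ 2) ≤ ‖vb u - vb v‖ ^ 2)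
        (fun v => if v ∈ S then η v else 0)
      rw [hmem S] at hS
      have hcl : ∑ v ∈ Finset.univ.filter (fun v : V =>
          ¬ ((1/2) * min (‖vb u‖ ^ 2) (‖vb v‖ ^ 2) ≤ ‖vb u - vb v‖ ^ 2)),
          (if v ∈ S then η v else 0) ≤ 4 * H := by
        refine le_trans (Finset.sum_le_sum fun v _ => ?_) (hclose u)
        by_cases h : v ∈ S <;> simp [h, hη0 v]
      rw [hFar]
      linarith [hsplit.symm.le, hsplit.le]
    -- pointwise domination
    have hpt : ∀ S : Finset V,
        (if u ∈ S ∧ 12 * H ≤ ∑ x ∈ S, η x then μ S else 0)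
        ≤ μ S * ((∑ v ∈ Far, (if u ∈ S ∧ v ∈ S then η v else 0)) / (8 * H)) := by
      intro S
      have hinner0 : (0:ℝ) ≤ ∑ v ∈ Far, (if u ∈ S ∧ v ∈ S then η v else 0) := by
        refine Finset.sum_nonneg fun v _ => ?_
        by_cases h : u ∈ S ∧ v ∈ S <;> simp [h, hη0 v]
      by_cases hcond : u ∈ S ∧ 12 * H ≤ ∑ x ∈ S, η x
      · rw [if_pos hcond]
        have heq : ∑ v ∈ Far, (if u ∈ S ∧ v ∈ S then η v else 0)
            = ∑ v ∈ Far, (if v ∈ S then η v else 0) := by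
          refine Finset.sum_congr rfl fun v _ => ?_
          simp [hcond.1]
        have h8 := h8H S hcond.2
        rw [heq]
        have h1 : (1:ℝ) ≤ (∑ v ∈ Far, (if v ∈ S then η v else 0)) / (8 * H) := by
          rw [le_div_iff₀ (by positivity)]
          linarith
        calc μ S = μ S * 1 := (mul_one _).symm
          _ ≤ μ S * ((∑ v ∈ Far, (if v ∈ S then η v else 0)) / (8 * H)) :=
              mul_le_mul_of_nonneg_left h1 (hμ0 S)
      · rw [if_neg hcond]
        exact mul_nonneg (hμ0 S) (div_nonneg hinner0 (by positivity))
    have hchain : ∑ S ∈ Finset.univ.filter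
        (fun S : Finset V => u ∈ S ∧ 12 * H ≤ ∑ x ∈ S, η x), μ S
        ≤ ∑ S : Finset V,
            μ S * ((∑ v ∈ Far, (if u ∈ S ∧ v ∈ S then η v else 0)) / (8 * H)) := by
      rw [Finset.sum_filter]
      exact Finset.sum_le_sum fun S _ => hpt S
    refine le_trans hchain ?_
    have hdiv : ∀ S : Finset V,
        μ S * ((∑ v ∈ Far, (if u ∈ S ∧ v ∈ S then η v else 0)) / (8 * H))
        = (μ S * (∑ v ∈ Far, (if u ∈ S ∧ v ∈ S then η v else 0))) * (8 * H)⁻¹ := by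
      intro S; rw [div_eq_mul_inv]; ring
    simp_rw [hdiv]
    rw [← Finset.sum_mul]
    rw [exch μ Far η (fun v S => u ∈ S ∧ v ∈ S)]
    have hterm : ∀ v ∈ Far, η v * ∑ S ∈ Finset.univ.filter
          (fun S : Finset V => u ∈ S ∧ v ∈ S), μ S
        ≤ η v * (α * ‖vb u‖ ^ 2 / (32 * (T:ℝ) * (k:ℝ))) := by
      intro v hv
      refine mul_le_mul_of_nonneg_left ?_ (hη0 v)
      have hfarv := (Finset.mem_filter.mp hv).2
      refine le_trans (hprop2 u v hfarv) ?_
      rw [hprop1, hprop1]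
      exact (div_le_div_iff_of_pos_right hTk).mpr (min_le_left _ _)
    have hsum2 : ∑ v ∈ Far, η v * ∑ S ∈ Finset.univ.filter
          (fun S : Finset V => u ∈ S ∧ v ∈ S), μ S
        ≤ α * ‖vb u‖ ^ 2 / (32 * (T:ℝ) * (k:ℝ)) := by
      refine le_trans (Finset.sum_le_sum hterm) ?_
      rw [← Finset.sum_mul]
      have hle1 : ∑ v ∈ Far, η v ≤ 1 := by
        rw [← hη1]
        exact Finset.sum_le_sum_of_subset_of_nonneg (Finset.filter_subset _ _)
          (fun v _ _ => hη0 v)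
      nlinarith [Finset.sum_nonneg (fun v (_ : v ∈ Far) => hη0 v),
        div_nonneg (by positivity : (0:ℝ) ≤ α * ‖vb u‖ ^ 2) hTk.le]
    have hfin : α * ‖vb u‖ ^ 2 / (32 * (T:ℝ) * (k:ℝ)) * (8 * H)⁻¹
        ≤ α * ‖vb u‖ ^ 2 / 8 := by
      have h1 : α * ‖vb u‖ ^ 2 / (32 * (T:ℝ) * (k:ℝ))
          ≤ α * ‖vb u‖ ^ 2 * H := by
        rw [div_eq_mul_one_div]
        exact mul_le_mul_of_nonneg_left hfrac (by positivity)
      have h2 : α * ‖vb u‖ ^ 2 * H * (8 * H)⁻¹ = α * ‖vb u‖ ^ 2 / 8 := by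
        field_simp
      calc α * ‖vb u‖ ^ 2 / (32 * (T:ℝ) * (k:ℝ)) * (8 * H)⁻¹
          ≤ α * ‖vb u‖ ^ 2 * H * (8 * H)⁻¹ :=
            mul_le_mul_of_nonneg_right h1 (by positivity)
        _ = α * ‖vb u‖ ^ 2 / 8 := h2
    calc (∑ v ∈ Far, η v * ∑ S ∈ Finset.univ.filter
          (fun S : Finset V => u ∈ S ∧ v ∈ S), μ S) * (8 * H)⁻¹
        ≤ (α * ‖vb u‖ ^ 2 / (32 * (T:ℝ) * (k:ℝ))) * (8 * H)⁻¹ :=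
          mul_le_mul_of_nonneg_right hsum2 (by positivity)
      _ ≤ α * ‖vb u‖ ^ 2 / 8 := hfin
  -- Loss bound
  have hLoss : ∑ S : Finset V,
      μ S * (if 12 * H ≤ ∑ v ∈ S, η v then ∑ v ∈ S, η v else 0)
      ≤ α * (∑ v, η v * ‖vb v‖ ^ 2) / 8 := by
    have h1 : ∀ S : Finset V,
        (if 12 * H ≤ ∑ v ∈ S, η v then ∑ v ∈ S, η v else 0)
        = ∑ v, (if v ∈ S ∧ 12 * H ≤ ∑ x ∈ S, η x then η v else 0) := by
      intro S
      by_cases hc : 12 * H ≤ ∑ v ∈ S, η v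
      · rw [if_pos hc, hmem S]
        refine Finset.sum_congr rfl fun v _ => ?_
        simp [hc]
      · rw [if_neg hc]
        symm
        refine Finset.sum_eq_zero fun v _ => ?_
        simp [hc]
    simp_rw [h1]
    rw [exch μ Finset.univ η (fun v S => v ∈ S ∧ 12 * H ≤ ∑ x ∈ S, η x)]
    have h2 : ∑ v, η v * ∑ S ∈ Finset.univ.filter
          (fun S : Finset V => v ∈ S ∧ 12 * H ≤ ∑ x ∈ S, η x), μ S
        ≤ ∑ v, η v * (α * ‖vb v‖ ^ 2 / 8) :=
      Finset.sum_le_sum fun v _ => mul_le_mul_of_nonneg_left (hkey v) (hη0 v)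
    refine le_trans h2 (le_of_eq ?_)
    rw [Finset.mul_sum, Finset.sum_div]
    exact Finset.sum_congr rfl fun v _ => by ring
  -- E[cut-term]
  have hEdt : ∑ S : Finset V, μ S * (cutw w S * H / (32 * D * SDP))
      ≤ α * H / 32 := by
    have h1 : ∀ S : Finset V, μ S * (cutw w S * H / (32 * D * SDP))
        = (μ S * cutw w S) * (H / (32 * D * SDP)) := fun S => by ring
    simp_rw [h1]
    rw [← Finset.sum_mul]
    have h2 : (0:ℝ) ≤ H / (32 * D * SDP) := by positivity
    refine le_trans (mul_le_mul_of_nonneg_right hEcut h2) (le_of_eq ?_)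
    field_simp
  -- pointwise bound on f
  have hpoint : ∀ S : Finset V,
      (∑ v ∈ S, η v) - (if 12 * H ≤ ∑ v ∈ S, η v then ∑ v ∈ S, η v else 0)
        - cutw w S * H / (32 * D * SDP)
        - 16 * (vioCount pairs S : ℝ) * H * (k:ℝ)
      ≤ f S := by
    intro S
    rw [hf S]
    have hdt : (0:ℝ) ≤ cutw w S * H / (32 * D * SDP) :=
      div_nonneg (mul_nonneg (hcutw0 S) hH0.le) (by positivity)
    have hvt : (0:ℝ) ≤ 16 * (vioCount pairs S : ℝ) * H * (k:ℝ) := by positivity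
    by_cases hg : S.Nonempty ∧ (∑ v ∈ S, η v) < 12 * H
    · rw [if_pos hg, if_neg (not_le.mpr hg.2)]
      linarith
    · rw [if_neg hg]
      by_cases hb : 12 * H ≤ ∑ v ∈ S, η v
      · rw [if_pos hb]; linarith
      · rw [if_neg hb]
        have hSe : S = ∅ := by
          rcases not_and_or.mp hg with h | h
          · exact Finset.not_nonempty_iff_eq_empty.mp h
          · exact absurd (not_le.mp hb) h
        subst hSe
        simp only [Finset.sum_empty]
        linarith
  -- assemble
  have hmain : ∑ S : Finset V,
      μ S * ((∑ v ∈ S, η v)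
        - (if 12 * H ≤ ∑ v ∈ S, η v then ∑ v ∈ S, η v else 0)
        - cutw w S * H / (32 * D * SDP)
        - 16 * (vioCount pairs S : ℝ) * H * (k:ℝ))
      ≤ ∑ S : Finset V, μ S * f S :=
    Finset.sum_le_sum fun S _ => mul_le_mul_of_nonneg_left (hpoint S) (hμ0 S)
  have hexpand : ∑ S : Finset V,
      μ S * ((∑ v ∈ S, η v)
        - (if 12 * H ≤ ∑ v ∈ S, η v then ∑ v ∈ S, η v else 0)
        - cutw w S * H / (32 * D * SDP)
        - 16 * (vioCount pairs S : ℝ) * H * (k:ℝ))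
      = (∑ S : Finset V, μ S * (∑ v ∈ S, η v))
        - (∑ S : Finset V, μ S * (if 12 * H ≤ ∑ v ∈ S, η v then ∑ v ∈ S, η v else 0))
        - (∑ S : Finset V, μ S * (cutw w S * H / (32 * D * SDP)))
        - (∑ S : Finset V, μ S * (16 * (vioCount pairs S : ℝ) * H * (k:ℝ))) := by
    simp only [mul_sub]
    rw [Finset.sum_sub_distrib, Finset.sum_sub_distrib, Finset.sum_sub_distrib]
  have hmm : α * (3 * H / 4) ≤ α * ∑ v, η v * ‖vb v‖ ^ 2 :=
    mul_le_mul_of_nonneg_left hmass hα.le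
  linarith [hmain, hexpand.symm.le, hexpand.le, hEeta, hLoss, hEdt, hEvio, hmm]
end

section
/- With the reduction from correlation clustering to multicut: let 𝒫 = {P_1,…,P_m} be any partition of V' separating all source-sink pairs of S_{G'}, and define the clustering 𝒞 = {C_1,…,C_m} of V by C_i = P_i ∩ V. Then cost(C_i) ≤ δ(P_i) for every i. -/
open Finset

attribute [local instance] Classical.propDecidable

/-- Disagreement of a cluster `C`: weight of negative edges inside `C` plus weight of
positive edges with exactly one endpoint in `C`. -/
noncomputable def ccCost {V : Type*} [Fintype V] (w : V → V → ℝ)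
    (neg : V → V → Prop) (C : Finset V) : ℝ :=
  (∑ u, ∑ v, if u ≠ v ∧ neg u v ∧ u ∈ C ∧ v ∈ C then w u v else 0) / 2
    + ∑ u, ∑ v, if u ≠ v ∧ ¬ neg u v ∧ u ∈ C ∧ v ∉ C then w u v else 0

/-- The vertex set `V' = V ⊎ {uv : (u,v) ∈ E⁻}` of the multicut instance obtained from a
correlation clustering instance; `F` is the set of (oriented representatives of the)
negative edges. -/
abbrev RedV (V : Type*) (F : Finset (V × V)) : Type _ := V ⊕ {p : V × V // p ∈ F}

/-- The edge weights of the multicut instance `G'`: every positive edge of `G` keeps its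
weight, and for each negative edge `(u,v) ∈ E⁻` the edge `(u, uv)` gets weight `w u v`. -/
noncomputable def redw {V : Type*} (w : V → V → ℝ) (neg : V → V → Prop)
    (F : Finset (V × V)) : RedV V F → RedV V F → ℝ
  | Sum.inl u, Sum.inl v => if u ≠ v ∧ ¬ neg u v then w u v else 0
  | Sum.inl u, Sum.inr e => if u = e.1.1 then w e.1.1 e.1.2 else 0
  | Sum.inr e, Sum.inl u => if u = e.1.1 then w e.1.1 e.1.2 else 0
  | Sum.inr _, Sum.inr _ => 0

/-- The restriction `P ∩ V` of a set of vertices of `G'` to the original vertices. -/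
noncomputable def redRestrict {V : Type*} [Fintype V] {F : Finset (V × V)}
    (P : Finset (RedV V F)) : Finset V :=
  Finset.univ.filter fun v : V => Sum.inl v ∈ P

/-- Lemma 3: if `𝒫` is a partition of `V'` separating all source-sink pairs
`{(v, uv) : (u,v) ∈ E⁻}` of the reduced multicut instance, then the clustering
`C_i = P_i ∩ V` satisfies `cost(C_i) ≤ δ(P_i)` for every part. -/
theorem cost_le_cut_of_reduction
    (V : Type) [Fintype V] [DecidableEq V]
    (w : V → V → ℝ) (neg : V → V → Prop)
    (hw : ∀ u v, w u v = w v u) (hw0 : ∀ u v, 0 ≤ w u v)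
    (hneg : ∀ u v, neg u v → neg v u)
    (F : Finset (V × V))
    (hF1 : ∀ p ∈ F, p.1 ≠ p.2 ∧ neg p.1 p.2)
    (hF2 : ∀ u v : V, u ≠ v → neg u v → ((u, v) ∈ F ∨ (v, u) ∈ F))
    (hF3 : ∀ p ∈ F, (p.2, p.1) ∉ F)
    (PP : Finpartition (Finset.univ : Finset (RedV V F)))
    (hsep : ∀ P ∈ PP.parts, ∀ e : {p : V × V // p ∈ F},
      ¬ (Sum.inl e.1.2 ∈ P ∧ Sum.inr e ∈ P)) :
    ∀ P ∈ PP.parts, ccCost w neg (redRestrict P) ≤ cutw (redw w neg F) P := by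
  intro P hP
  classical
  have hmem : ∀ v : V, v ∈ redRestrict (F := F) P ↔ Sum.inl v ∈ P := by
    intro v; simp [redRestrict]
  set C := redRestrict (F := F) P with hC
  set A : ℝ := ∑ u : V, ∑ v : V,
      if u ≠ v ∧ ¬ neg u v ∧ u ∈ C ∧ v ∉ C then w u v else 0 with hA
  set N : ℝ := ∑ u : V, ∑ v : V,
      if u ≠ v ∧ neg u v ∧ u ∈ C ∧ v ∈ C then w u v else 0 with hN
  set B : ℝ := ∑ e : {p : V × V // p ∈ F},
      if Sum.inl e.1.1 ∈ P ∧ Sum.inr e ∉ P then w e.1.1 e.1.2 else 0 with hB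
  set T : ℝ := ∑ e : {p : V × V // p ∈ F},
      if e.1.1 ∈ C ∧ e.1.2 ∈ C then w e.1.1 e.1.2 else 0 with hT
  have hcc : ccCost w neg C = N / 2 + A := by
    rw [hN, hA]; unfold ccCost
    congr 1
    · congr 1
      exact Finset.sum_congr rfl fun u _ => Finset.sum_congr rfl fun v _ => by
        split_ifs <;> rfl
    · exact Finset.sum_congr rfl fun u _ => Finset.sum_congr rfl fun v _ => by
        split_ifs <;> rfl
  -- Claim 1 : N = 2 * T
  have claim1 : N = 2 * T := by
    have hpt : ∀ u v : V,
        (if u ≠ v ∧ neg u v ∧ u ∈ C ∧ v ∈ C then w u v else 0) =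
        (if (u, v) ∈ F ∧ u ∈ C ∧ v ∈ C then w u v else 0)
          + (if (v, u) ∈ F ∧ v ∈ C ∧ u ∈ C then w v u else 0) := by
      intro u v
      by_cases h : u ≠ v ∧ neg u v ∧ u ∈ C ∧ v ∈ C
      · obtain ⟨hne, hn, hu, hv⟩ := h
        rcases hF2 u v hne hn with hf | hf
        · have hnf : (v, u) ∉ F := hF3 (u, v) hf
          rw [if_pos ⟨hne, hn, hu, hv⟩, if_pos ⟨hf, hu, hv⟩,
            if_neg (by tauto), add_zero]
        · have hnf : (u, v) ∉ F := hF3 (v, u) hf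
          rw [if_pos ⟨hne, hn, hu, hv⟩, if_neg (by tauto),
            if_pos ⟨hf, hv, hu⟩, zero_add, hw u v]
      · rw [if_neg h, if_neg, if_neg, add_zero]
        · rintro ⟨hf, hv, hu⟩
          obtain ⟨hne, hn⟩ := hF1 (v, u) hf
          exact h ⟨hne.symm, hneg v u hn, hu, hv⟩
        · rintro ⟨hf, hu, hv⟩
          obtain ⟨hne, hn⟩ := hF1 (u, v) hf
          exact h ⟨hne, hn, hu, hv⟩
    have hg : ∀ u v : V,
        (if (u, v) ∈ F ∧ u ∈ C ∧ v ∈ C then w u v else 0) =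
        (fun p : V × V => if p ∈ F ∧ p.1 ∈ C ∧ p.2 ∈ C then w p.1 p.2 else 0) (u, v) :=
      fun u v => rfl
    have hsum : (∑ u : V, ∑ v : V,
        if (u, v) ∈ F ∧ u ∈ C ∧ v ∈ C then w u v else 0) = T := by
      rw [← Finset.sum_product']
      have : ∀ p ∈ (Finset.univ ×ˢ Finset.univ : Finset (V × V)),
          (if (p.1, p.2) ∈ F ∧ p.1 ∈ C ∧ p.2 ∈ C then w p.1 p.2 else 0)
          = (if p ∈ F then (if p.1 ∈ C ∧ p.2 ∈ C then w p.1 p.2 else 0) else 0) := by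
        intro p _
        rcases p with ⟨u, v⟩
        by_cases hf : (u, v) ∈ F <;> by_cases hc : u ∈ C ∧ v ∈ C <;>
          simp [hf, hc]
      rw [Finset.sum_congr rfl this, Finset.sum_ite_mem,
        Finset.univ_product_univ, Finset.univ_inter, hT,
        Finset.sum_coe_sort F (fun p => if p.1 ∈ C ∧ p.2 ∈ C then w p.1 p.2 else 0)]
    have hsum2 : (∑ u : V, ∑ v : V,
        if (v, u) ∈ F ∧ v ∈ C ∧ u ∈ C then w v u else 0) = T := by
      rw [Finset.sum_comm]; exact hsum
    calc N = (∑ u : V, ∑ v : V,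
          ((if (u, v) ∈ F ∧ u ∈ C ∧ v ∈ C then w u v else 0)
            + (if (v, u) ∈ F ∧ v ∈ C ∧ u ∈ C then w v u else 0))) := by
            rw [hN]; exact Finset.sum_congr rfl fun u _ =>
              Finset.sum_congr rfl fun v _ => hpt u v
      _ = (∑ u : V, ∑ v : V, if (u, v) ∈ F ∧ u ∈ C ∧ v ∈ C then w u v else 0)
            + (∑ u : V, ∑ v : V, if (v, u) ∈ F ∧ v ∈ C ∧ u ∈ C then w v u else 0) := by
            simp [Finset.sum_add_distrib]
      _ = 2 * T := by rw [hsum, hsum2]; ring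
  -- Claim 2 : T ≤ B
  have claim2 : T ≤ B := by
    apply Finset.sum_le_sum
    intro e _
    by_cases h : e.1.1 ∈ C ∧ e.1.2 ∈ C
    · have h1 : Sum.inl e.1.1 ∈ P := (hmem e.1.1).1 h.1
      have h2 : Sum.inr e ∉ P := fun hin =>
        hsep P hP e ⟨(hmem e.1.2).1 h.2, hin⟩
      rw [if_pos h, if_pos ⟨h1, h2⟩]
    · rw [if_neg h]
      split_ifs with h'
      · exact hw0 _ _
      · exact le_refl 0
  -- Claim 3 : A + B ≤ cutw
  have claim3 : A + B ≤ cutw (redw w neg F) P := by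
    have hAeq : (∑ u : V, ∑ v : V,
        if Sum.inl u ∈ P ∧ Sum.inl v ∉ P then redw w neg F (Sum.inl u) (Sum.inl v) else 0)
        = A := by
      rw [hA]
      refine Finset.sum_congr rfl fun u _ => Finset.sum_congr rfl fun v _ => ?_
      have hmu := hmem u
      have hmv := hmem v
      simp only [redw]
      split_ifs <;> tauto
    have hBeq : (∑ u : V, ∑ e : {p : V × V // p ∈ F},
        if Sum.inl u ∈ P ∧ Sum.inr e ∉ P then redw w neg F (Sum.inl u) (Sum.inr e) else 0)
        = B := by
      rw [Finset.sum_comm, hB]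
      refine Finset.sum_congr rfl fun e _ => ?_
      have : ∀ u : V, (if Sum.inl u ∈ P ∧ Sum.inr e ∉ P
            then redw w neg F (Sum.inl u) (Sum.inr e) else 0)
          = (if u = e.1.1 then
              (if Sum.inl e.1.1 ∈ P ∧ Sum.inr e ∉ P then w e.1.1 e.1.2 else 0) else 0) := by
        intro u
        simp only [redw]
        by_cases hu : u = e.1.1
        · subst hu; split_ifs <;> tauto
        · rw [if_neg hu, if_neg hu, ite_self]
      rw [Finset.sum_congr rfl fun u _ => this u, Finset.sum_ite_eq' Finset.univ,
        if_pos (Finset.mem_univ _)]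
    have hnn : ∀ (x y : RedV V F), 0 ≤ (if x ∈ P ∧ y ∉ P then redw w neg F x y else 0) := by
      intro x y
      split_ifs
      · rcases x with u | e <;> rcases y with v | f <;> simp only [redw]
        all_goals first
          | exact le_refl 0
          | (split_ifs <;> first | exact hw0 _ _ | exact le_refl 0)
      · exact le_refl 0
    have hexp : cutw (redw w neg F) P =
        ((∑ u : V, ∑ v : V,
          if Sum.inl u ∈ P ∧ Sum.inl v ∉ P then redw w neg F (Sum.inl u) (Sum.inl v) else 0)
        + (∑ u : V, ∑ e : {p : V × V // p ∈ F},
          if Sum.inl u ∈ P ∧ Sum.inr e ∉ P then redw w neg F (Sum.inl u) (Sum.inr e) else 0))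
        + (∑ e : {p : V × V // p ∈ F}, ∑ y : RedV V F,
          if Sum.inr e ∈ P ∧ y ∉ P then redw w neg F (Sum.inr e) y else 0) := by
      unfold cutw
      rw [Fintype.sum_sum_type]
      congr 1
      · rw [← Finset.sum_add_distrib]
        refine Finset.sum_congr rfl fun u _ => ?_
        rw [Fintype.sum_sum_type]
        congr 1 <;> exact Finset.sum_congr rfl fun _ _ => by split_ifs <;> rfl
      · exact Finset.sum_congr rfl fun e _ => Finset.sum_congr rfl fun y _ => by
          split_ifs <;> rfl
    rw [hexp, hAeq, hBeq]
    have h1 : (0:ℝ) ≤ ∑ e : {p : V × V // p ∈ F}, ∑ y : RedV V F,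
        if Sum.inr e ∈ P ∧ y ∉ P then redw w neg F (Sum.inr e) y else 0 :=
      Finset.sum_nonneg fun e _ => Finset.sum_nonneg fun y _ => hnn _ _
    linarith
  rw [hcc, claim1]
  have : 2 * T / 2 = T := by ring
  rw [this]
  linarith
end

section
/- With the reduction from correlation clustering to multicut: for every clustering 𝒞 = {C_1,…,C_m} of V there exists a partition 𝒫 of V' separating all source-sink pairs of S_{G'} with max_{P∈𝒫} δ(P) ≤ max_{1≤i≤m} cost(C_i). Consequently, the minimum over all partitions of V' separating all source-sink pairs of the maximum cut weight of a part is at most the minimum over all clusterings of V of the maximum disagreement of a cluster. -/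
open Finset

attribute [local instance] Classical.propDecidable

/-! Put each new vertex `uv` into the part of the cluster `C ∋ u` when `v ∉ C`, and collect the
new vertices of the negative edges inside `C` into one extra part. The part of `C` is then cut
exactly by the positive edges leaving `C` and by the edges `(u, uv)` of the negative edges inside
`C`, the extra part only by the latter. As every negative edge is represented once in `F`, both
weigh at most `cost(C)`. -/

namespace Finpartition

theorem exists_forall_mem_iff_of_mem_parts_ofSetoid_ker {α β : Type*} [Fintype α]
    [DecidableEq α] {f : α → β} [DecidableRel (Setoid.ker f)] {P : Finset α}
    (hP : P ∈ (ofSetoid (Setoid.ker f)).parts) : ∃ a, ∀ b, b ∈ P ↔ f b = f a := by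
  obtain ⟨a, ha⟩ := (ofSetoid (Setoid.ker f)).nonempty_of_mem_parts hP
  refine ⟨a, fun b => ?_⟩
  rw [← (ofSetoid _).part_eq_of_mem hP ha, mem_part_ofSetoid_iff_rel, Setoid.ker_def, eq_comm]

end Finpartition

theorem ite_zero_le_ite_zero {M : Type*} [Zero M] [Preorder M] {p q : Prop} [Decidable p]
    [Decidable q] {a : M} (hpq : p → q) (ha : 0 ≤ a) :
    (if p then a else 0) ≤ if q then a else 0 := by
  split_ifs with hp hq
  exacts [le_rfl, absurd (hpq hp) hq, ha, le_rfl]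

section Reduction

variable {V : Type*} [Fintype V] {w : V → V → ℝ} {neg : V → V → Prop} {F : Finset (V × V)}

/-- Each negative edge is counted twice in the ordered sum over `V × V`: once as its
representative in `F` and once as the reversed pair, which is not in `F`. -/
theorem sum_oriented_inside_le_half (hw : ∀ u v, w u v = w v u) (hw0 : ∀ u v, 0 ≤ w u v)
    (hneg : ∀ u v, neg u v → neg v u) (hF1 : ∀ p ∈ F, p.1 ≠ p.2 ∧ neg p.1 p.2)
    (hF3 : ∀ p ∈ F, (p.2, p.1) ∉ F) (C : Finset V) :
    ∑ p ∈ F, (if p.1 ∈ C ∧ p.2 ∈ C then w p.1 p.2 else 0)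
      ≤ (∑ u, ∑ v, if u ≠ v ∧ neg u v ∧ u ∈ C ∧ v ∈ C then w u v else 0) / 2 := by
  set g : V × V → ℝ := fun p => if p.1 ≠ p.2 ∧ neg p.1 p.2 ∧ p.1 ∈ C ∧ p.2 ∈ C then w p.1 p.2 else 0
  have hg : ∀ p ∈ F, g p = if p.1 ∈ C ∧ p.2 ∈ C then w p.1 p.2 else 0 := fun p hp => by
    simp [g, (hF1 p hp).1, (hF1 p hp).2]
  have hg_swap : ∀ p ∈ F, g p.swap = g p := fun p hp => by
    simp [g, (hF1 p hp).1, (hF1 p hp).1.symm, (hF1 p hp).2, hneg _ _ (hF1 p hp).2, hw p.2 p.1,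
      and_comm]
  have hdisj : Disjoint F (F.image Prod.swap) := by
    rw [disjoint_left]
    rintro p hp hp'
    obtain ⟨q, hq, rfl⟩ := mem_image.1 hp'
    exact hF3 q hq hp
  have hsum_swap : ∑ p ∈ F.image Prod.swap, g p = ∑ p ∈ F, g p := by
    rw [sum_image fun p _ q _ h => Prod.swap_injective h]
    exact sum_congr rfl hg_swap
  calc ∑ p ∈ F, (if p.1 ∈ C ∧ p.2 ∈ C then w p.1 p.2 else 0)
      = (∑ p ∈ F ∪ F.image Prod.swap, g p) / 2 := by
        rw [sum_union hdisj, hsum_swap, ← sum_congr rfl hg]; ring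
    _ ≤ (∑ p, g p) / 2 := div_le_div_of_nonneg_right
        (sum_le_sum_of_subset_of_nonneg (subset_univ _) fun p _ _ => ite_nonneg (hw0 _ _) le_rfl)
        zero_le_two
    _ = _ := by rw [← Fintype.sum_prod_type']

theorem cutw_redw (S : Finset (RedV V F)) :
    cutw (redw w neg F) S
      = (∑ u, ∑ v, if Sum.inl u ∈ S ∧ Sum.inl v ∉ S ∧ u ≠ v ∧ ¬ neg u v then w u v else 0)
        + ∑ e : F, if ¬ (Sum.inl e.1.1 ∈ S ↔ Sum.inr e ∈ S) then w e.1.1 e.1.2 else 0 := by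
  simp only [cutw, Fintype.sum_sum_type, redw, sum_add_distrib]
  have hpos : ∀ u v : V, (if Sum.inl u ∈ S ∧ Sum.inl v ∉ S then
      (if u ≠ v ∧ ¬ neg u v then w u v else 0) else 0)
      = if Sum.inl u ∈ S ∧ Sum.inl v ∉ S ∧ u ≠ v ∧ ¬ neg u v then w u v else 0 := by
    intro u v; simp only [← ite_and, and_assoc]
  have hout : (∑ u : V, ∑ e : F, if Sum.inl u ∈ S ∧ Sum.inr e ∉ S then
      (if u = e.1.1 then w e.1.1 e.1.2 else 0) else 0)
      = ∑ e : F, if Sum.inl e.1.1 ∈ S ∧ Sum.inr e ∉ S then w e.1.1 e.1.2 else 0 := by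
    rw [sum_comm]
    refine sum_congr rfl fun e _ => ?_
    rw [sum_eq_single e.1.1 (fun u _ hu => by simp [hu]) (by simp)]
    simp
  have hin : ∀ e : F, (∑ u : V, if Sum.inr e ∈ S ∧ Sum.inl u ∉ S then
      (if u = e.1.1 then w e.1.1 e.1.2 else 0) else 0)
      = if Sum.inr e ∈ S ∧ Sum.inl e.1.1 ∉ S then w e.1.1 e.1.2 else 0 := by
    intro e
    rw [sum_eq_single e.1.1 (fun u _ hu => by simp [hu]) (by simp)]
    simp
  simp only [hpos, hout, hin, ite_self, sum_const_zero, add_zero, add_assoc, ← sum_add_distrib]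
  congr 1
  refine sum_congr rfl fun e _ => ?_
  by_cases hu : Sum.inl e.1.1 ∈ S <;> by_cases he : Sum.inr e ∈ S <;> simp [hu, he]

theorem cutw_redw_le_ccCost (hw : ∀ u v, w u v = w v u) (hw0 : ∀ u v, 0 ≤ w u v)
    (hneg : ∀ u v, neg u v → neg v u) (hF1 : ∀ p ∈ F, p.1 ≠ p.2 ∧ neg p.1 p.2)
    (hF3 : ∀ p ∈ F, (p.2, p.1) ∉ F) {S : Finset (RedV V F)} {C : Finset V}
    (hV : ∀ u v, Sum.inl u ∈ S → Sum.inl v ∉ S → u ∈ C ∧ v ∉ C)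
    (hE : ∀ e : F, ¬ (Sum.inl e.1.1 ∈ S ↔ Sum.inr e ∈ S) → e.1.1 ∈ C ∧ e.1.2 ∈ C) :
    cutw (redw w neg F) S ≤ ccCost w neg C := by
  have hpos : (∑ u, ∑ v, if Sum.inl u ∈ S ∧ Sum.inl v ∉ S ∧ u ≠ v ∧ ¬ neg u v then w u v else 0)
      ≤ ∑ u, ∑ v, if u ≠ v ∧ ¬ neg u v ∧ u ∈ C ∧ v ∉ C then w u v else 0 :=
    sum_le_sum fun u _ => sum_le_sum fun v _ => ite_zero_le_ite_zero
      (fun h => ⟨h.2.2.1, h.2.2.2, hV u v h.1 h.2.1⟩) (hw0 u v)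
  have hnew : (∑ e : F, if ¬ (Sum.inl e.1.1 ∈ S ↔ Sum.inr e ∈ S) then w e.1.1 e.1.2 else 0)
      ≤ ∑ p ∈ F, if p.1 ∈ C ∧ p.2 ∈ C then w p.1 p.2 else 0 := by
    rw [← sum_coe_sort F]
    exact sum_le_sum fun e _ => ite_zero_le_ite_zero (hE e) (hw0 _ _)
  rw [cutw_redw, ccCost]
  linarith [sum_oriented_inside_le_half hw hw0 hneg hF1 hF3 C]

variable [DecidableEq V]

noncomputable def clusterLabel (CC : Finpartition (univ : Finset V)) :
    RedV V F → Finset V × Bool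
  | Sum.inl v => (CC.part v, false)
  | Sum.inr e => (CC.part e.1.1, decide (e.1.2 ∈ CC.part e.1.1))

variable {CC : Finpartition (univ : Finset V)}

theorem clusterLabel_fst_mem_parts (x : RedV V F) : (clusterLabel CC x).1 ∈ CC.parts := by
  cases x <;> simp [clusterLabel]

theorem clusterLabel_inl_ne_inr (e : F) :
    clusterLabel CC (Sum.inl e.1.2 : RedV V F) ≠ clusterLabel CC (Sum.inr e) := by
  intro h
  simp only [clusterLabel, Prod.mk.injEq] at h
  rw [← h.1] at h
  simp at h

theorem cutw_redw_le_ccCost_of_fiber_clusterLabel (hw : ∀ u v, w u v = w v u)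
    (hw0 : ∀ u v, 0 ≤ w u v) (hneg : ∀ u v, neg u v → neg v u)
    (hF1 : ∀ p ∈ F, p.1 ≠ p.2 ∧ neg p.1 p.2) (hF3 : ∀ p ∈ F, (p.2, p.1) ∉ F)
    {P : Finset (RedV V F)} {t : Finset V × Bool} (ht : t.1 ∈ CC.parts)
    (hP : ∀ x, x ∈ P ↔ clusterLabel CC x = t) :
    cutw (redw w neg F) P ≤ ccCost w neg t.1 := by
  obtain ⟨C, b⟩ := t
  have hinl : ∀ v, Sum.inl v ∈ P ↔ v ∈ C ∧ b = false := by
    intro v; rw [hP]; simp [clusterLabel, CC.part_eq_iff_mem ht, @eq_comm Bool false]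
  have hinr : ∀ e : F, Sum.inr e ∈ P ↔ e.1.1 ∈ C ∧ (e.1.2 ∈ C ↔ b = true) := by
    intro e
    rw [hP]
    simp only [clusterLabel, Prod.mk.injEq, CC.part_eq_iff_mem ht]
    refine and_congr_right fun he => ?_
    rw [CC.part_eq_of_mem ht he]
    cases b <;> simp
  refine cutw_redw_le_ccCost hw hw0 hneg hF1 hF3 (fun u v hu hv => ?_) (fun e he => ?_)
  · rw [hinl] at hu hv; exact ⟨hu.1, fun h => hv ⟨h, hu.2⟩⟩
  · rw [hinl, hinr] at he; cases b <;> tauto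

end Reduction

theorem reduction_cut_le_cost_general
    (V : Type) [Fintype V] [DecidableEq V]
    (w : V → V → ℝ) (neg : V → V → Prop)
    (hw : ∀ u v, w u v = w v u) (hw0 : ∀ u v, 0 ≤ w u v)
    (hneg : ∀ u v, neg u v → neg v u)
    (F : Finset (V × V))
    (hF1 : ∀ p ∈ F, p.1 ≠ p.2 ∧ neg p.1 p.2)
    (hF3 : ∀ p ∈ F, (p.2, p.1) ∉ F)
    (CC : Finpartition (Finset.univ : Finset V)) :
    ∃ PP : Finpartition (Finset.univ : Finset (RedV V F)),
      (∀ P ∈ PP.parts, ∀ e : {p : V × V // p ∈ F},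
        ¬ (Sum.inl e.1.2 ∈ P ∧ Sum.inr e ∈ P)) ∧
      ∀ M : ℝ, (∀ C ∈ CC.parts, ccCost w neg C ≤ M) →
        ∀ P ∈ PP.parts, cutw (redw w neg F) P ≤ M := by
  refine ⟨Finpartition.ofSetoid (Setoid.ker (clusterLabel CC)),
    fun P hP e hmem => ?_, fun M hM P hP => ?_⟩
  all_goals obtain ⟨a, ha⟩ := Finpartition.exists_forall_mem_iff_of_mem_parts_ofSetoid_ker hP
  · exact clusterLabel_inl_ne_inr e (((ha _).1 hmem.1).trans ((ha _).1 hmem.2).symm)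
  · have hC := clusterLabel_fst_mem_parts (CC := CC) a
    exact (cutw_redw_le_ccCost_of_fiber_clusterLabel hw hw0 hneg hF1 hF3 hC ha).trans (hM _ hC)

/-- Lemma 4: for every clustering `𝒞` of `V` there is a partition `𝒫` of `V'`
separating all source-sink pairs `{(v, uv) : (u,v) ∈ E⁻}` of the reduced multicut
instance whose maximum cut weight is at most the maximum disagreement of `𝒞`
(phrased via an arbitrary upper bound `M` on the disagreements of the clusters).
Consequently the optimum of min-max multicut on `G'` is at most the optimum of
min-max correlation clustering on `G`. -/
theorem reduction_cut_le_cost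
    (V : Type) [Fintype V] [DecidableEq V]
    (w : V → V → ℝ) (neg : V → V → Prop)
    (hw : ∀ u v, w u v = w v u) (hw0 : ∀ u v, 0 ≤ w u v)
    (hneg : ∀ u v, neg u v → neg v u)
    (F : Finset (V × V))
    (hF1 : ∀ p ∈ F, p.1 ≠ p.2 ∧ neg p.1 p.2)
    (hF2 : ∀ u v : V, u ≠ v → neg u v → ((u, v) ∈ F ∨ (v, u) ∈ F))
    (hF3 : ∀ p ∈ F, (p.2, p.1) ∉ F)
    (CC : Finpartition (Finset.univ : Finset V)) :
    ∃ PP : Finpartition (Finset.univ : Finset (RedV V F)),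
      (∀ P ∈ PP.parts, ∀ e : {p : V × V // p ∈ F},
        ¬ (Sum.inl e.1.2 ∈ P ∧ Sum.inr e ∈ P)) ∧
      ∀ M : ℝ, (∀ C ∈ CC.parts, ccCost w neg C ≤ M) →
        ∀ P ∈ PP.parts, cutw (redw w neg F) P ≤ M :=
  reduction_cut_le_cost_general V w neg hw hw0 hneg F hF1 hF3 CC
end

section
/- Let G=(V,w) be an edge-weighted graph with source-sink pairs S_G, let B ≥ 0, and let 𝒮 be a finite family of subsets of V whose union is V such that every S ∈ 𝒮 satisfies δ(S) ≤ B and vio(S) = 0. Then there exists a partition 𝒫 of V such that every part P ∈ 𝒫 is contained in some member of 𝒮, δ(P) ≤ 2B, and vio(P) = 0. -/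
open Finset

attribute [local instance] Classical.propDecidable

/-- symmetric "crossing" sum -/
noncomputable def cutw2 {V : Type*} [Fintype V] (w : V → V → ℝ) (S : Finset V) : ℝ :=
  ∑ u, ∑ v, if (u ∈ S ∧ v ∉ S) ∨ (v ∈ S ∧ u ∉ S) then w u v else 0

lemma cutw2_eq {V : Type*} [Fintype V] (w : V → V → ℝ) (hw : ∀ u v, w u v = w v u)
    (S : Finset V) : cutw2 w S = 2 * cutw w S := by
  have h1 : ∀ u v : V, (if (u ∈ S ∧ v ∉ S) ∨ (v ∈ S ∧ u ∉ S) then w u v else 0)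
      = (if u ∈ S ∧ v ∉ S then w u v else 0) + (if v ∈ S ∧ u ∉ S then w u v else 0) := by
    intro u v
    by_cases h1 : u ∈ S <;> by_cases h2 : v ∈ S <;> simp [h1, h2]
  have : cutw2 w S = cutw w S + ∑ u, ∑ v, (if v ∈ S ∧ u ∉ S then w u v else 0) := by
    simp only [cutw2, cutw, h1, Finset.sum_add_distrib]
  rw [this]
  have h2 : ∑ u : V, ∑ v : V, (if v ∈ S ∧ u ∉ S then w u v else 0)
      = ∑ v : V, ∑ u : V, (if v ∈ S ∧ u ∉ S then w u v else 0) := Finset.sum_comm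
  have h3 : ∑ v : V, ∑ u : V, (if v ∈ S ∧ u ∉ S then w u v else 0) = cutw w S := by
    unfold cutw
    refine Finset.sum_congr rfl fun v _ => Finset.sum_congr rfl fun u _ => ?_
    rw [hw u v]
  rw [h2, h3]; ring

lemma posimodular {V : Type*} [Fintype V] [DecidableEq V] (w : V → V → ℝ)
    (hw : ∀ u v, w u v = w v u) (hw0 : ∀ u v, 0 ≤ w u v) (A B : Finset V) :
    cutw w (A \ B) + cutw w (B \ A) ≤ cutw w A + cutw w B := by
  have key : cutw2 w (A \ B) + cutw2 w (B \ A) ≤ cutw2 w A + cutw2 w B := by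
    unfold cutw2
    rw [← Finset.sum_add_distrib, ← Finset.sum_add_distrib]
    refine Finset.sum_le_sum fun u _ => ?_
    rw [← Finset.sum_add_distrib, ← Finset.sum_add_distrib]
    refine Finset.sum_le_sum fun v _ => ?_
    by_cases hua : u ∈ A <;> by_cases hub : u ∈ B <;> by_cases hva : v ∈ A <;>
      by_cases hvb : v ∈ B <;>
      simp [Finset.mem_sdiff, hua, hub, hva, hvb] <;> linarith [hw0 u v]
  rw [cutw2_eq w hw, cutw2_eq w hw, cutw2_eq w hw, cutw2_eq w hw] at key
  linarith

lemma vio_mono {V : Type*} {T : ℕ} (pairs : Fin T → V × V) {P s : Finset V}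
    (h : P ⊆ s) : vioCount pairs P ≤ vioCount pairs s := by
  apply Finset.card_le_card
  intro i hi
  simp only [Finset.mem_filter] at hi ⊢
  exact ⟨hi.1, h hi.2.1, h hi.2.2⟩

/-- Build a partition from a pairwise-disjoint cover. -/
lemma build (V : Type) [Fintype V] [DecidableEq V] (S' : Finset (Finset V))
    (hcov : ∀ v : V, ∃ s ∈ S', v ∈ s)
    (hdisj : ∀ A ∈ S', ∀ C ∈ S', A ≠ C → Disjoint A C) :
    ∃ PP : Finpartition (Finset.univ : Finset V), ∀ P ∈ PP.parts, P ∈ S' := by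
  refine ⟨⟨S'.erase ∅, ?_, ?_, ?_⟩, fun P hP => Finset.mem_of_mem_erase hP⟩
  · rw [Finset.supIndep_iff_pairwiseDisjoint]
    intro a ha b hb hab
    exact hdisj a (Finset.mem_of_mem_erase ha) b (Finset.mem_of_mem_erase hb) hab
  · apply Finset.Subset.antisymm
    · intro v _; exact Finset.mem_univ v
    · intro v _
      obtain ⟨s, hs, hvs⟩ := hcov v
      have hsne : s ≠ (∅ : Finset V) := fun h => by simp [h] at hvs
      exact Finset.mem_sup.mpr ⟨s, Finset.mem_erase.mpr ⟨hsne, hs⟩, hvs⟩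
  · exact fun h => (Finset.mem_erase.mp h).1 rfl

/-- Key induction: uncross until pairwise disjoint. -/
lemma uncross
    (V : Type) [Fintype V] [DecidableEq V] (w : V → V → ℝ)
    (hw : ∀ u v, w u v = w v u) (hw0 : ∀ u v, 0 ≤ w u v)
    (B : ℝ) (S : Finset (Finset V)) :
    ∀ n : ℕ, ∀ S' : Finset (Finset V), (∑ s ∈ S', s.card) ≤ n →
    (∀ v : V, ∃ s ∈ S', v ∈ s) →
    (∀ t ∈ S', cutw w t ≤ B) →
    (∀ t ∈ S', ∃ s ∈ S, t ⊆ s) →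
    ∃ PP : Finpartition (Finset.univ : Finset V),
      ∀ P ∈ PP.parts, cutw w P ≤ B ∧ ∃ s ∈ S, P ⊆ s := by
  intro n
  induction n with
  | zero =>
    intro S' hsum hcov hcut hsub
    obtain ⟨PP, hPP⟩ := build V S' hcov (by
      intro A hA C hC hne
      have h2 : A.card ≤ ∑ s ∈ S', s.card := Finset.single_le_sum (fun _ _ => Nat.zero_le _) hA
      have : A = (∅ : Finset V) := Finset.card_eq_zero.mp (by omega)
      simp [this])
    exact ⟨PP, fun P hP => ⟨hcut P (hPP P hP), hsub P (hPP P hP)⟩⟩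
  | succ n ih =>
    intro S' hsum hcov hcut hsub
    by_cases hdisj : ∀ A ∈ S', ∀ C ∈ S', A ≠ C → Disjoint A C
    · obtain ⟨PP, hPP⟩ := build V S' hcov hdisj
      exact ⟨PP, fun P hP => ⟨hcut P (hPP P hP), hsub P (hPP P hP)⟩⟩
    · push_neg at hdisj
      obtain ⟨A, hA, C, hC, hne, hnd⟩ := hdisj
      -- helper: replace A by A \ C
      have key : ∀ A C : Finset V, A ∈ S' → C ∈ S' → A ≠ C → ¬Disjoint A C →
          cutw w (A \ C) ≤ B →
          ∃ PP : Finpartition (Finset.univ : Finset V),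
            ∀ P ∈ PP.parts, cutw w P ≤ B ∧ ∃ s ∈ S, P ⊆ s := by
        intro A C hA hC hne hnd hcutAC
        set S'' : Finset (Finset V) := insert (A \ C) (S'.erase A) with hS''
        have herase : (S'.erase A) ⊆ S' := Finset.erase_subset _ _
        obtain ⟨x, hxA, hxC⟩ := Finset.not_disjoint_iff.mp hnd
        -- measure decreases
        have hss : A \ C ⊂ A := by
          refine Finset.ssubset_iff_of_subset Finset.sdiff_subset |>.mpr ⟨x, hxA, ?_⟩
          simp [hxC]
        have hcardlt : (A \ C).card < A.card := Finset.card_lt_card hss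
        have hsum' : (∑ s ∈ S'', s.card) ≤ n := by
          have hins : (∑ s ∈ S'', s.card) ≤ (A \ C).card + ∑ s ∈ S'.erase A, s.card := by
            by_cases hmem : (A \ C) ∈ S'.erase A
            · rw [hS'', Finset.insert_eq_self.mpr hmem]; omega
            · rw [hS'', Finset.sum_insert hmem]
          have heq : (∑ s ∈ S'.erase A, s.card) + A.card = ∑ s ∈ S', s.card :=
            Finset.sum_erase_add S' _ hA
          omega
        have hcov'' : ∀ v : V, ∃ s ∈ S'', v ∈ s := by
          intro v
          obtain ⟨s, hs, hvs⟩ := hcov v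
          by_cases hsA : s = A
          · by_cases hvC : v ∈ C
            · exact ⟨C, by simp [hS'', Finset.mem_erase, hC, Ne.symm hne], hvC⟩
            · exact ⟨A \ C, by simp [hS''], by simp [hvC, hsA ▸ hvs]⟩
          · exact ⟨s, by simp [hS'', Finset.mem_erase, hsA, hs], hvs⟩
        have hcut'' : ∀ t ∈ S'', cutw w t ≤ B := by
          intro t ht
          rcases Finset.mem_insert.mp ht with h | h
          · exact h ▸ hcutAC
          · exact hcut t (herase h)
        have hsub'' : ∀ t ∈ S'', ∃ s ∈ S, t ⊆ s := by
          intro t ht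
          rcases Finset.mem_insert.mp ht with h | h
          · obtain ⟨s, hs, hAs⟩ := hsub A hA
            exact ⟨s, hs, h ▸ (Finset.sdiff_subset.trans hAs)⟩
          · exact hsub t (herase h)
        exact ih S'' hsum' hcov'' hcut'' hsub''
      -- choose which of A \ C, C \ A has small cut, by posimodularity
      have hpos := posimodular w hw hw0 A C
      by_cases hAC : cutw w (A \ C) ≤ B
      · exact key A C hA hC hne hnd hAC
      · have hCA : cutw w (C \ A) ≤ B := by
          have h1 := hcut A hA
          have h2 := hcut C hC
          linarith
        exact key C A hC hA (Ne.symm hne) (fun h => hnd h.symm) hCA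

/-- Theorem 8 (aggregation, existence form): given a cover of `V` by sets of cut weight
at most `B` and no source-sink violations, there is a partition of `V`, each part
contained in some cover set, with cut weight at most `2B` and no violations. -/
theorem aggregation
    (V : Type) [Fintype V] [DecidableEq V] (w : V → V → ℝ)
    (hw : ∀ u v, w u v = w v u) (hw0 : ∀ u v, 0 ≤ w u v)
    (T : ℕ) (pairs : Fin T → V × V)
    (B : ℝ) (hB : 0 ≤ B)
    (S : Finset (Finset V))
    (hcover : ∀ v : V, ∃ s ∈ S, v ∈ s)
    (hcut : ∀ s ∈ S, cutw w s ≤ B)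
    (hvio : ∀ s ∈ S, vioCount pairs s = 0) :
    ∃ PP : Finpartition (Finset.univ : Finset V),
      ∀ P ∈ PP.parts,
        (∃ s ∈ S, P ⊆ s) ∧ cutw w P ≤ 2 * B ∧ vioCount pairs P = 0 := by
  obtain ⟨PP, hPP⟩ := uncross V w hw hw0 B S (∑ s ∈ S, s.card) S le_rfl hcover hcut
    (fun t ht => ⟨t, ht, Finset.Subset.refl t⟩)
  refine ⟨PP, fun P hP => ?_⟩
  obtain ⟨hcutP, s, hs, hPs⟩ := hPP P hP
  refine ⟨⟨s, hs, hPs⟩, by linarith, ?_⟩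
  have h1 := vio_mono pairs hPs
  have h2 := hvio s hs
  omega
end

section
/- Let G=(V,w) be an edge-weighted graph, let {P_1,…,P_m} be a partition of V, fix an index i, and let S ⊆ V with P_i ⊆ S. Then δ(S) + Σ_{j≠i} δ(P_j ∖ S) ≤ Σ_{j=1}^m δ(P_j) + 2·δ(S) − 2·δ(P_i). -/
open Finset

attribute [local instance] Classical.propDecidable

noncomputable def dd {V : Type*} (u v : V) (A : Finset V) : ℝ :=
  (if u ∈ A ∧ v ∉ A then 1 else 0) + (if v ∈ A ∧ u ∉ A then 1 else 0)

lemma sum_aux' {m : ℕ} (T : Finset (Fin m)) (a : Fin m) (Q : Fin m → Prop) :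
    ∑ j ∈ T, (if j = a ∧ Q j then (1:ℝ) else 0) = if a ∈ T ∧ Q a then 1 else 0 := by
  have h : ∀ j ∈ T, (if j = a ∧ Q j then (1:ℝ) else 0)
      = if j = a then (if Q j then (1:ℝ) else 0) else 0 := by
    intro j _
    by_cases hj : j = a <;> simp [hj]
  rw [Finset.sum_congr rfl h, Finset.sum_ite_eq' T a]
  split_ifs <;> simp_all

lemma two_cutw {V : Type*} [Fintype V] (w : V → V → ℝ) (hw : ∀ u v, w u v = w v u)
    (A : Finset V) :
    ∑ u, ∑ v, w u v * dd u v A = 2 * cutw w A := by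
  have h1 : ∑ u : V, ∑ v : V, (if u ∈ A ∧ v ∉ A then w u v else 0) = cutw w A := rfl
  have h2 : ∑ u : V, ∑ v : V, (if v ∈ A ∧ u ∉ A then w u v else 0) = cutw w A := by
    rw [Finset.sum_comm]
    refine Finset.sum_congr rfl fun x _ => Finset.sum_congr rfl fun y _ => ?_
    rw [hw y x]
  have : ∀ u v : V, w u v * dd u v A =
      (if u ∈ A ∧ v ∉ A then w u v else 0) + (if v ∈ A ∧ u ∉ A then w u v else 0) := by
    intro u v
    unfold dd
    split_ifs <;> ring
  simp_rw [this, Finset.sum_add_distrib, h1, h2]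
  ring

lemma swap3 {α β γ M : Type*} [AddCommMonoid M]
    (s : Finset α) (t : Finset β) (r : Finset γ) (f : α → β → γ → M) :
    ∑ a ∈ s, ∑ b ∈ t, ∑ c ∈ r, f a b c = ∑ c ∈ r, ∑ a ∈ s, ∑ b ∈ t, f a b c := by
  calc ∑ a ∈ s, ∑ b ∈ t, ∑ c ∈ r, f a b c = ∑ a ∈ s, ∑ c ∈ r, ∑ b ∈ t, f a b c :=
        Finset.sum_congr rfl fun a _ => Finset.sum_comm
    _ = ∑ c ∈ r, ∑ a ∈ s, ∑ b ∈ t, f a b c := Finset.sum_comm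

set_option maxHeartbeats 1000000 in
lemma pointwise {V : Type*} [Fintype V] [DecidableEq V]
    (m : ℕ) (P : Fin m → Finset V)
    (hdisj : ∀ i j, i ≠ j → Disjoint (P i) (P j))
    (hcover : ∀ v : V, ∃ i, v ∈ P i)
    (i : Fin m) (S : Finset V) (hPS : P i ⊆ S) (u v : V) :
    dd u v S + ∑ j ∈ Finset.univ.erase i, dd u v (P j \ S) ≤
      (∑ j, dd u v (P j)) + 2 * dd u v S - 2 * dd u v (P i) := by
  obtain ⟨a, ha⟩ := hcover u
  obtain ⟨b, hb⟩ := hcover v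
  have hu : ∀ j, u ∈ P j ↔ j = a := by
    intro j
    constructor
    · intro h
      by_contra hne
      exact Finset.disjoint_left.mp (hdisj j a hne) h ha
    · rintro rfl; exact ha
  have hv : ∀ j, v ∈ P j ↔ j = b := by
    intro j
    constructor
    · intro h
      by_contra hne
      exact Finset.disjoint_left.mp (hdisj j b hne) h hb
    · rintro rfl; exact hb
  have haS : a = i → u ∈ S := fun h => hPS ((hu i).mpr h.symm)
  have hbS : b = i → v ∈ S := fun h => hPS ((hv i).mpr h.symm)
  unfold dd
  by_cases hus : u ∈ S <;> by_cases hvs : v ∈ S <;>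
    by_cases hab : a = b <;> by_cases hai : a = i <;> by_cases hbi : b = i <;>
    simp_all [Finset.mem_sdiff, Finset.mem_erase, ite_and, Finset.sum_ite_eq',
      Finset.sum_add_distrib] <;>
    (try split_ifs) <;> (try norm_num) <;> simp_all

/-- The uncrossing inequality from Step 2 of the aggregation procedure: replacing part
`P i` by `S ⊇ P i` and removing `S` from the other parts satisfies
`δ(S) + Σ_{j≠i} δ(P j ∖ S) ≤ Σ_j δ(P j) + 2δ(S) − 2δ(P i)`. -/
theorem uncrossing_inequality
    (V : Type) [Fintype V] [DecidableEq V] (w : V → V → ℝ)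
    (hw : ∀ u v, w u v = w v u) (hw0 : ∀ u v, 0 ≤ w u v)
    (m : ℕ) (P : Fin m → Finset V)
    (hdisj : ∀ i j, i ≠ j → Disjoint (P i) (P j))
    (hcover : ∀ v : V, ∃ i, v ∈ P i)
    (i : Fin m) (S : Finset V) (hPS : P i ⊆ S) :
    cutw w S + ∑ j ∈ Finset.univ.erase i, cutw w (P j \ S) ≤
      (∑ j, cutw w (P j)) + 2 * cutw w S - 2 * cutw w (P i) := by
  have key : ∑ u, ∑ v, w u v * (dd u v S + ∑ j ∈ Finset.univ.erase i, dd u v (P j \ S)) ≤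
      ∑ u, ∑ v, w u v * ((∑ j, dd u v (P j)) + 2 * dd u v S - 2 * dd u v (P i)) := by
    refine Finset.sum_le_sum fun x _ => Finset.sum_le_sum fun y _ => ?_
    exact mul_le_mul_of_nonneg_left (pointwise m P hdisj hcover i S hPS x y) (hw0 x y)
  have expandL : ∑ u, ∑ v, w u v * (dd u v S + ∑ j ∈ Finset.univ.erase i, dd u v (P j \ S)) =
      2 * cutw w S + ∑ j ∈ Finset.univ.erase i, 2 * cutw w (P j \ S) := by
    simp_rw [mul_add, Finset.mul_sum, Finset.sum_add_distrib, two_cutw w hw]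
    congr 1
    rw [swap3]
    exact Finset.sum_congr rfl fun j _ => two_cutw w hw (P j \ S)
  have expandR : ∑ u, ∑ v, w u v * ((∑ j, dd u v (P j)) + 2 * dd u v S - 2 * dd u v (P i)) =
      (∑ j, 2 * cutw w (P j)) + 2 * (2 * cutw w S) - 2 * (2 * cutw w (P i)) := by
    have e1 : ∑ u, ∑ v, w u v * ∑ j, dd u v (P j) = ∑ j, 2 * cutw w (P j) := by
      simp_rw [Finset.mul_sum]
      rw [swap3]
      exact Finset.sum_congr rfl fun j _ => two_cutw w hw (P j)
    have e2 : ∑ u, ∑ v, w u v * (2 * dd u v S) = 2 * (2 * cutw w S) := by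
      have h : ∀ u v : V, w u v * (2 * dd u v S) = 2 * (w u v * dd u v S) :=
        fun u v => by ring
      simp_rw [h, ← Finset.mul_sum, two_cutw w hw]
    have e3 : ∑ u, ∑ v, w u v * (2 * dd u v (P i)) = 2 * (2 * cutw w (P i)) := by
      have h : ∀ u v : V, w u v * (2 * dd u v (P i)) = 2 * (w u v * dd u v (P i)) :=
        fun u v => by ring
      simp_rw [h, ← Finset.mul_sum, two_cutw w hw]
    have h : ∀ u v : V, w u v * ((∑ j, dd u v (P j)) + 2 * dd u v S - 2 * dd u v (P i))
        = w u v * (∑ j, dd u v (P j)) + w u v * (2 * dd u v S)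
          - w u v * (2 * dd u v (P i)) := fun u v => by ring
    simp_rw [h, Finset.sum_sub_distrib, Finset.sum_add_distrib]
    rw [e1, e2, e3]
  rw [expandL, expandR] at key
  have h1 : ∑ j ∈ Finset.univ.erase i, 2 * cutw w (P j \ S)
      = 2 * ∑ j ∈ Finset.univ.erase i, cutw w (P j \ S) := by rw [Finset.mul_sum]
  have h2 : ∑ j, 2 * cutw w (P j) = 2 * ∑ j, cutw w (P j) := by rw [Finset.mul_sum]
  rw [h1, h2] at key
  linarith
end

section
/- Let G=(V,w) be an edge-weighted graph with |V| = n, let k ≥ 1 and c ∈ (0,1] be real numbers, let B ≥ 0, and let S_1,…,S_N be a finite list of subsets of V whose union is V such that δ(S_t) ≤ B for every t and every vertex of V belongs to at least (c/(n·k))·N of the sets S_t. Let σ be a uniformly random permutation of {1,…,N} and define P_i = S_{σ(i)} ∖ (S_{σ(1)} ∪ ⋯ ∪ S_{σ(i−1)}) for 1 ≤ i ≤ N. Then E[Σ_{i=1}^{N} δ(P_i)] ≤ 2·k·n·B/c. -/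
open Finset

attribute [local instance] Classical.propDecidable

/-!
Write `R u = containing S u` for the indices of the cover sets containing `u`. Under the order `σ`,
`u` falls into the part of the first element of `R u` to be processed, so `u` and `v` are separated
exactly when the first element of `R u ∪ R v` to be processed lies outside `R u ∩ R v`. The first
element of a set `C` to be processed is uniformly distributed on `C` (transpositions of elements of
`C` permute the orders), so this happens with probability
`|R u ∆ R v| / |R u ∪ R v| ≤ |R u ∆ R v| · n k / (c N)`. Finally
`∑ u v, |R u ∆ R v| w u v = 2 ∑ t, δ(S t) ≤ 2 N B` by the symmetry of `w`.
-/

section FirstIndex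

variable {α : Type*} [Fintype α] [LinearOrder α] (σ : Equiv.Perm α)

/-- Reading `σ 0, σ 1, …` as the order in which the elements of `α` are processed, the position
at which the first element of `A` is processed (`⊤` if `A = ∅`). -/
noncomputable def firstIndex (A : Finset α) : WithTop α :=
  ({i | σ i ∈ A} : Finset α).min

lemma firstIndex_union (A B : Finset α) :
    firstIndex σ (A ∪ B) = min (firstIndex σ A) (firstIndex σ B) := by
  simp only [firstIndex, mem_union, filter_or]
  convert Finset.min_union (α := α)

lemma firstIndex_mono {A B : Finset α} (h : A ⊆ B) : firstIndex σ B ≤ firstIndex σ A :=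
  min_mono (monotone_filter_right _ fun _ _ hi => h hi)

lemma firstIndex_singleton (t : α) : firstIndex σ {t} = σ.symm t := by
  have hfilter : ({i | σ i ∈ ({t} : Finset α)} : Finset α) = {σ.symm t} := by
    ext i
    simp [Equiv.eq_symm_apply]
  rw [firstIndex, hfilter, min_singleton]

lemma apply_mem_of_firstIndex_eq {A : Finset α} {i : α} (h : firstIndex σ A = i) : σ i ∈ A :=
  (mem_filter.mp (mem_of_min h)).2

lemma firstIndex_le_of_apply_mem {A : Finset α} {i : α} (h : σ i ∈ A) : firstIndex σ A ≤ i :=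
  min_le (mem_filter.mpr ⟨mem_univ i, h⟩)

lemma firstIndex_eq_coe_iff {A : Finset α} {i : α} :
    firstIndex σ A = i ↔ σ i ∈ A ∧ ∀ j < i, σ j ∉ A := by
  refine ⟨fun h => ⟨apply_mem_of_firstIndex_eq σ h, fun j hj hjA => ?_⟩, fun ⟨hi, hlt⟩ => ?_⟩
  · exact notMem_of_lt_min hj h (mem_filter.mpr ⟨mem_univ j, hjA⟩)
  · refine le_antisymm (firstIndex_le_of_apply_mem σ hi) (Finset.le_min fun j hj => ?_)
    exact WithTop.coe_le_coe.mpr (not_lt.mp fun hji => hlt j hji (mem_filter.mp hj).2)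

lemma firstIndex_mul_of_forall_mem_iff {π : Equiv.Perm α} {A : Finset α}
    (h : ∀ x, π x ∈ A ↔ x ∈ A) : firstIndex (π * σ) A = firstIndex σ A := by
  simp only [firstIndex, Equiv.Perm.mul_apply, h]

lemma exists_firstIndex_eq_coe {A : Finset α} (hA : A.Nonempty) : ∃ i : α, firstIndex σ A = i :=
  let ⟨t, ht⟩ := hA
  min_of_mem (mem_filter.mpr ⟨mem_univ (σ.symm t), by simpa using ht⟩)

lemma firstIndex_eq_iff_exists_singleton {C D : Finset α} (hDC : D ⊆ C) (hC : C.Nonempty) :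
    firstIndex σ D = firstIndex σ C ↔ ∃ t ∈ D, firstIndex σ {t} = firstIndex σ C := by
  constructor
  · intro h
    obtain ⟨i, hi⟩ := exists_firstIndex_eq_coe σ hC
    refine ⟨σ i, apply_mem_of_firstIndex_eq σ (h.trans hi), ?_⟩
    rw [firstIndex_singleton, Equiv.symm_apply_apply, hi]
  · rintro ⟨t, ht, h⟩
    exact le_antisymm (h ▸ firstIndex_mono σ (singleton_subset_iff.mpr ht))
      (firstIndex_mono σ hDC)

lemma firstIndex_eq_iff_inter_eq_union {A B : Finset α} :
    firstIndex σ A = firstIndex σ B ↔ firstIndex σ (A ∩ B) = firstIndex σ (A ∪ B) := by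
  have hA := firstIndex_mono σ (inter_subset_left : A ∩ B ⊆ A)
  have hB := firstIndex_mono σ (inter_subset_right : A ∩ B ⊆ B)
  rw [firstIndex_union]
  constructor
  · intro h
    rw [← h, min_self]
    refine le_antisymm ?_ hA
    by_cases hA' : firstIndex σ A = ⊤
    · exact hA' ▸ le_top
    · obtain ⟨i, hi⟩ := WithTop.ne_top_iff_exists.mp hA'
      exact hi ▸ firstIndex_le_of_apply_mem σ (mem_inter.mpr
          ⟨apply_mem_of_firstIndex_eq σ hi.symm, apply_mem_of_firstIndex_eq σ (h ▸ hi.symm)⟩)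
  · intro h
    exact le_antisymm (hA.trans (h.le.trans (min_le_right _ _)))
      (hB.trans (h.le.trans (min_le_left _ _)))

end FirstIndex

section Counting

variable {α : Type*} [Fintype α] [LinearOrder α]

open Equiv

lemma card_firstIndex_singleton_eq_of_mem {C : Finset α} {t t' : α} (ht : t ∈ C) (ht' : t' ∈ C) :
    #{σ : Perm α | firstIndex σ {t} = firstIndex σ C}
      = #{σ : Perm α | firstIndex σ {t'} = firstIndex σ C} := by
  have hC : ∀ x, swap t t' x ∈ C ↔ x ∈ C := fun x => by
    rcases eq_or_ne x t with rfl | hxt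
    · simp [ht, ht']
    rcases eq_or_ne x t' with rfl | hxt'
    · simp [ht, ht']
    · rw [swap_apply_of_ne_of_ne hxt hxt']
  refine card_equiv (Equiv.mulLeft (swap t t')) fun σ => ?_
  simp only [mem_filter, mem_univ, true_and, Equiv.coe_mulLeft,
    firstIndex_mul_of_forall_mem_iff σ hC, firstIndex_singleton]
  simp [Perm.mul_def]

/-- The first element of `C` to be processed is uniformly distributed on `C`. -/
lemma card_firstIndex_eq_mul_card {C D : Finset α} (hDC : D ⊆ C) :
    #{σ : Perm α | firstIndex σ D = firstIndex σ C} * #C = #D * (Fintype.card α).factorial := by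
  rcases C.eq_empty_or_nonempty with rfl | hC
  · simp [subset_empty.mp hDC]
  obtain ⟨t₀, ht₀⟩ := hC
  set m := #{σ : Perm α | firstIndex σ {t₀} = firstIndex σ C}
  have hfiber : ∀ D ⊆ C, #{σ : Perm α | firstIndex σ D = firstIndex σ C} = #D * m := by
    intro D hDC
    have hunion : ({σ : Perm α | firstIndex σ D = firstIndex σ C} : Finset _)
        = D.biUnion fun t => {σ : Perm α | firstIndex σ {t} = firstIndex σ C} := by
      ext σ
      simp [firstIndex_eq_iff_exists_singleton σ hDC ⟨t₀, ht₀⟩]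
    rw [hunion, card_biUnion,
      sum_const_nat fun t ht => card_firstIndex_singleton_eq_of_mem (hDC ht) ht₀]
    intro t _ t' _ hne
    refine disjoint_left.mpr fun σ h h' => hne ?_
    simp only [mem_filter, mem_univ, true_and, firstIndex_singleton] at h h'
    exact σ.symm.injective (WithTop.coe_injective (h.trans h'.symm))
  have hall := hfiber C subset_rfl
  rw [filter_true_of_mem fun _ _ => rfl, card_univ, Fintype.card_perm] at hall
  rw [hfiber D hDC, hall]
  ring

lemma card_firstIndex_ne_mul_card (A B : Finset α) :
    #{σ : Perm α | firstIndex σ A ≠ firstIndex σ B} * #(A ∪ B)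
      = (#(A \ B) + #(B \ A)) * (Fintype.card α).factorial := by
  have heq := card_firstIndex_eq_mul_card (inter_subset_union : A ∩ B ⊆ A ∪ B)
  simp only [← firstIndex_eq_iff_inter_eq_union] at heq
  have hsplit := card_filter_add_card_filter_not (s := (univ : Finset (Perm α)))
    fun σ => firstIndex σ A = firstIndex σ B
  rw [card_univ, Fintype.card_perm] at hsplit
  have hU := card_union_add_card_inter A B
  have hA := card_sdiff_add_card_inter A B
  have hB := card_sdiff_add_card_inter B A
  rw [inter_comm] at hB
  nlinarith

end Counting

lemma sum_cutw_eq_of_mem_iff {V ι : Type*} [Fintype V] [Fintype ι] (w : V → V → ℝ)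
    (P : ι → Finset V) (g : V → WithTop ι)
    (hg : ∀ u i, u ∈ P i ↔ g u = i) (hg_ne_top : ∀ u, g u ≠ ⊤) :
    ∑ i, cutw w (P i) = ∑ u, ∑ v, if g u = g v then 0 else w u v := by
  simp only [cutw, hg]
  rw [sum_comm]
  refine sum_congr rfl fun u _ => ?_
  rw [sum_comm]
  refine sum_congr rfl fun v _ => ?_
  obtain ⟨j, hj⟩ := WithTop.ne_top_iff_exists.mp (hg_ne_top u)
  simp [← hj, ite_and, eq_comm]

section OrderedPart

variable {V α : Type*} [Fintype α] (S : α → Finset V)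

noncomputable def containing (u : V) : Finset α := {t | u ∈ S t}

lemma sum_sum_card_containing_sdiff_mul [Fintype V] (w : V → V → ℝ) :
    ∑ u, ∑ v, (#(containing S u \ containing S v) : ℝ) * w u v = ∑ t, cutw w (S t) := by
  have hcard : ∀ u v, (#(containing S u \ containing S v) : ℝ)
      = ∑ t, if u ∈ S t ∧ v ∉ S t then 1 else 0 := fun u v => by
    rw [← natCast_card_filter]
    congr 2
    ext t
    simp [containing]
  simp only [cutw, hcard, sum_mul, ite_mul, one_mul, zero_mul]
  exact (sum_congr rfl fun _ _ => sum_comm).trans sum_comm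

variable [LinearOrder α]

noncomputable def orderedPart (σ : Equiv.Perm α) (i : α) : Finset V :=
  S (σ i) \ ({j | j < i} : Finset α).biUnion fun j => S (σ j)

lemma mem_orderedPart_iff {σ : Equiv.Perm α} {i : α} {u : V} :
    u ∈ orderedPart S σ i ↔ firstIndex σ (containing S u) = i := by
  simp [orderedPart, containing, firstIndex_eq_coe_iff]

variable [Fintype V] (w : V → V → ℝ)

lemma sum_perm_sum_cutw_orderedPart (hcover : ∀ u, ∃ t, u ∈ S t) :
    ∑ σ : Equiv.Perm α, ∑ i, cutw w (orderedPart S σ i) = ∑ u, ∑ v,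
      (#{σ : Equiv.Perm α | firstIndex σ (containing S u) ≠ firstIndex σ (containing S v)} : ℝ)
        * w u v := by
  have hne_top : ∀ σ u, firstIndex σ (containing S u) ≠ ⊤ := fun σ u => by
    obtain ⟨t, ht⟩ := hcover u
    obtain ⟨i, hi⟩ := exists_firstIndex_eq_coe σ (A := containing S u)
      ⟨t, by simpa [containing] using ht⟩
    exact hi ▸ WithTop.coe_ne_top
  simp only [fun σ => sum_cutw_eq_of_mem_iff w (orderedPart S σ) _
    (fun u i => mem_orderedPart_iff S) (hne_top σ)]
  rw [sum_comm]
  refine sum_congr rfl fun u _ => ?_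
  rw [sum_comm]
  refine sum_congr rfl fun v _ => ?_
  simp [natCast_card_filter, sum_mul, ite_not]

lemma sum_perm_sum_cutw_orderedPart_mul_le (hw : ∀ u v, w u v = w v u) (hw0 : ∀ u v, 0 ≤ w u v)
    (hcover : ∀ u, ∃ t, u ∈ S t) {q : ℝ} (hq : ∀ u, q ≤ #(containing S u)) :
    (∑ σ : Equiv.Perm α, ∑ i, cutw w (orderedPart S σ i)) * q
      ≤ 2 * (Fintype.card α).factorial * ∑ t, cutw w (S t) := by
  have hswap : ∑ u, ∑ v, (#(containing S v \ containing S u) : ℝ) * w u v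
      = ∑ t, cutw w (S t) := by
    rw [sum_comm, ← sum_sum_card_containing_sdiff_mul S w]
    simp only [hw]
  rw [sum_perm_sum_cutw_orderedPart S w hcover, sum_mul]
  calc ∑ u, (∑ v, (#{σ : Equiv.Perm α | firstIndex σ (containing S u)
          ≠ firstIndex σ (containing S v)} : ℝ) * w u v) * q
      ≤ ∑ u, ∑ v, (#{σ : Equiv.Perm α | firstIndex σ (containing S u)
          ≠ firstIndex σ (containing S v)} * #(containing S u ∪ containing S v) : ℕ) * w u v := by
        simp only [sum_mul]
        refine sum_le_sum fun u _ => sum_le_sum fun v _ => ?_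
        rw [mul_right_comm, Nat.cast_mul]
        gcongr
        · exact hw0 u v
        · exact (hq u).trans (by exact_mod_cast card_le_card subset_union_left)
    _ = (Fintype.card α).factorial * (∑ u, ∑ v, (#(containing S u \ containing S v) : ℝ) * w u v
          + ∑ u, ∑ v, (#(containing S v \ containing S u) : ℝ) * w u v) := by
        simp only [card_firstIndex_ne_mul_card, mul_sum, ← sum_add_distrib]
        push_cast
        exact sum_congr rfl fun u _ => sum_congr rfl fun v _ => by ring
    _ = 2 * (Fintype.card α).factorial * ∑ t, cutw w (S t) := by
        rw [sum_sum_card_containing_sdiff_mul, hswap]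
        ring

end OrderedPart

theorem random_order_expectation_bound_general
    (V : Type) [Fintype V] [DecidableEq V] (w : V → V → ℝ)
    (hw : ∀ u v, w u v = w v u) (hw0 : ∀ u v, 0 ≤ w u v)
    (k c B : ℝ) (hk : 1 ≤ k) (hc0 : 0 < c)
    (N : ℕ) (S : Fin N → Finset V)
    (hcover : ∀ v : V, ∃ t, v ∈ S t)
    (hcut : ∀ t, cutw w (S t) ≤ B)
    (hfrac : ∀ v : V, (c / ((Fintype.card V : ℝ) * k)) * N ≤
      ((Finset.univ.filter fun t : Fin N => v ∈ S t).card : ℝ)) :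
    (∑ σ : Equiv.Perm (Fin N), ∑ i : Fin N,
        cutw w ((S (σ i)) \
          ((Finset.univ.filter fun j : Fin N => j < i).biUnion fun j => S (σ j))))
      / (Nat.factorial N : ℝ) ≤ 2 * k * (Fintype.card V : ℝ) * B / c := by
  rcases isEmpty_or_nonempty V with hV | ⟨⟨v⟩⟩
  · simp [cutw]
  have hN : 0 < N := Fin.pos (hcover v).choose
  have hn : (0 : ℝ) < Fintype.card V := by exact_mod_cast Fintype.card_pos_iff.mpr ⟨v⟩
  set q := c / (Fintype.card V * k) * N
  have hq : 0 < q := by positivity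
  have key := sum_perm_sum_cutw_orderedPart_mul_le S w hw hw0 hcover (q := q) fun u => by
    convert hfrac u using 3
    ext
    simp [containing]
  rw [Fintype.card_fin, ← le_div_iff₀ hq] at key
  have hcuts : ∑ t, cutw w (S t) ≤ N * B := by
    simpa using sum_le_sum fun t (_ : t ∈ univ) => hcut t
  rw [div_le_iff₀ (by positivity)]
  calc _ ≤ (2 * N.factorial * ∑ t, cutw w (S t)) / q := by
        -- the statement's `Fintype`/decidability instances are not the classical ones used above
        refine le_trans (le_of_eq ?_) key
        refine sum_congr (congrArg _ (Subsingleton.elim _ _)) fun σ _ => ?_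
        simp only [orderedPart]
        congr!
    _ ≤ 2 * N.factorial * (N * B) / q := by gcongr
    _ = 2 * k * Fintype.card V * B / c * N.factorial := by
        simp only [q]
        field_simp

/-- Step 1 of the aggregation procedure: processing the cover sets in a uniformly random
order and setting `P_i = S_{σ(i)} ∖ (S_{σ(1)} ∪ ⋯ ∪ S_{σ(i−1)})`, the expected total cut
weight of the parts is at most `2·k·n·B/c`. -/
theorem random_order_expectation_bound
    (V : Type) [Fintype V] [DecidableEq V] (w : V → V → ℝ)
    (hw : ∀ u v, w u v = w v u) (hw0 : ∀ u v, 0 ≤ w u v)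
    (k c B : ℝ) (hk : 1 ≤ k) (hc0 : 0 < c) (hc1 : c ≤ 1) (hB : 0 ≤ B)
    (N : ℕ) (S : Fin N → Finset V)
    (hcover : ∀ v : V, ∃ t, v ∈ S t)
    (hcut : ∀ t, cutw w (S t) ≤ B)
    (hfrac : ∀ v : V, (c / ((Fintype.card V : ℝ) * k)) * N ≤
      ((Finset.univ.filter fun t : Fin N => v ∈ S t).card : ℝ)) :
    (∑ σ : Equiv.Perm (Fin N), ∑ i : Fin N,
        cutw w ((S (σ i)) \
          ((Finset.univ.filter fun j : Fin N => j < i).biUnion fun j => S (σ j))))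
      / (Nat.factorial N : ℝ) ≤ 2 * k * (Fintype.card V : ℝ) * B / c :=
  random_order_expectation_bound_general V w hw hw0 k c B hk hc0 N S hcover hcut hfrac
end
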